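/- Under the MOSS-4 sampling scheme, each induced 4-node connected subgraph s of G belonging to motif class M_i^{(4)} is sampled (in a single trial) with probability p_i = 2 φ_i^{(1)} / Γ, where φ_i^{(1)} is the number of P_4-subgraphs of M_i^{(4)} and Γ = Σ_{v∈V} (d_v − 1) Σ_{x∈N_v} (d_x − 1). -/
import Mathlib


open SimpleGraph

/-- The path `P₄` on four vertices. -/
def P4 : SimpleGraph (Fin 4) := fromEdgeSet {s(0, 1), s(1, 2), s(2, 3)}

open Finset in
lemma MOSS.card_le_three {α : Type*} [DecidableEq α] (x y z : α) :
    ({x, y, z} : Finset α).card ≤ 3 :=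
  le_trans (card_insert_le _ _) (Nat.succ_le_succ
    (le_trans (card_insert_le _ _) (Nat.succ_le_succ (le_of_eq (card_singleton _)))))

open Finset in
lemma MOSS.distinct_of_card4 {α : Type*} [DecidableEq α] {a b c d : α}
    (h : ({a, b, c, d} : Finset α).card = 4) :
    a ≠ b ∧ a ≠ c ∧ a ≠ d ∧ b ≠ c ∧ b ≠ d ∧ c ≠ d := by
  refine ⟨?_, ?_, ?_, ?_, ?_, ?_⟩ <;> intro heq
  · have h3 := (Finset.card_le_card (s := ({a, b, c, d} : Finset α)) (t := {b, c, d})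
      (fun z hz => by simp [heq] at hz ⊢; tauto)).trans (MOSS.card_le_three b c d)
    omega
  · have h3 := (Finset.card_le_card (s := ({a, b, c, d} : Finset α)) (t := {b, c, d})
      (fun z hz => by simp [heq] at hz ⊢; tauto)).trans (MOSS.card_le_three b c d)
    omega
  · have h3 := (Finset.card_le_card (s := ({a, b, c, d} : Finset α)) (t := {b, c, d})
      (fun z hz => by simp [heq] at hz ⊢; tauto)).trans (MOSS.card_le_three b c d)
    omega
  · have h3 := (Finset.card_le_card (s := ({a, b, c, d} : Finset α)) (t := {a, c, d})
      (fun z hz => by simp [heq] at hz ⊢; tauto)).trans (MOSS.card_le_three a c d)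
    omega
  · have h3 := (Finset.card_le_card (s := ({a, b, c, d} : Finset α)) (t := {a, c, d})
      (fun z hz => by simp [heq] at hz ⊢; tauto)).trans (MOSS.card_le_three a c d)
    omega
  · have h3 := (Finset.card_le_card (s := ({a, b, c, d} : Finset α)) (t := {a, b, d})
      (fun z hz => by simp [heq] at hz ⊢; tauto)).trans (MOSS.card_le_three a b d)
    omega

open Finset in
lemma MOSS.card4_of_distinct {α : Type*} [DecidableEq α] {a b c d : α}
    (h1 : a ≠ b) (h2 : a ≠ c) (h3 : a ≠ d) (h4 : b ≠ c) (h5 : b ≠ d) (h6 : c ≠ d) :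
    ({a, b, c, d} : Finset α).card = 4 := by
  rw [Finset.card_insert_of_notMem (by simp [h1, h2, h3]),
    Finset.card_insert_of_notMem (by simp [h4, h5]),
    Finset.card_insert_of_notMem (by simp [h6]), Finset.card_singleton]

lemma MOSS.p4_adj (x y : Fin 4) :
    P4.Adj x y ↔ (s(x, y) = s(0, 1) ∨ s(x, y) = s(1, 2) ∨ s(x, y) = s(2, 3)) ∧ x ≠ y := by
  simp [P4, fromEdgeSet_adj]

lemma MOSS.fe_adj (a b c d x y : Fin 4) :
    (fromEdgeSet {s(a, b), s(b, c), s(c, d)} : SimpleGraph (Fin 4)).Adj x y ↔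
      (s(x, y) = s(a, b) ∨ s(x, y) = s(b, c) ∨ s(x, y) = s(c, d)) ∧ x ≠ y := by
  simp [fromEdgeSet_adj]

lemma MOSS.sym2_congr {α β : Type*} {f : α → β} (hf : Function.Injective f) {x y u v : α} :
    s(f x, f y) = s(f u, f v) ↔ s(x, y) = s(u, v) := by
  simp [Sym2.eq_iff, hf.eq_iff]

set_option synthInstance.maxSize 4000 in
set_option synthInstance.maxHeartbeats 1000000 in
lemma MOSS.vec_inj_aux : ∀ a b c d : Fin 4, a ≠ b → a ≠ c → a ≠ d → b ≠ c → b ≠ d → c ≠ d →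
    ∀ x y : Fin 4, ![a, b, c, d] x = ![a, b, c, d] y → x = y := by decide

set_option maxRecDepth 100000 in
set_option synthInstance.maxSize 4000 in
set_option synthInstance.maxHeartbeats 1000000 in
lemma MOSS.path_iso_aux : ∀ a b c d x y : Fin 4,
    a ≠ b → a ≠ c → a ≠ d → b ≠ c → b ≠ d → c ≠ d →
    (((s(![a, b, c, d] x, ![a, b, c, d] y) = s(a, b) ∨
        s(![a, b, c, d] x, ![a, b, c, d] y) = s(b, c) ∨
        s(![a, b, c, d] x, ![a, b, c, d] y) = s(c, d)) ∧
        ![a, b, c, d] x ≠ ![a, b, c, d] y) ↔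
      ((s(x, y) = s(0, 1) ∨ s(x, y) = s(1, 2) ∨ s(x, y) = s(2, 3)) ∧ x ≠ y)) := by decide

set_option maxRecDepth 100000 in
set_option synthInstance.maxSize 4000 in
set_option synthInstance.maxHeartbeats 1000000 in
set_option maxHeartbeats 4000000 in
lemma MOSS.path_inj_aux : ∀ a b c d a' b' c' d' : Fin 4,
    a ≠ b → a ≠ c → a ≠ d → b ≠ c → b ≠ d → c ≠ d → a < d →
    a' ≠ b' → a' ≠ c' → a' ≠ d' → b' ≠ c' → b' ≠ d' → c' ≠ d' → a' < d' →
    (∀ x y : Fin 4, ((s(x, y) = s(a, b) ∨ s(x, y) = s(b, c) ∨ s(x, y) = s(c, d)) ∧ x ≠ y) ↔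
      ((s(x, y) = s(a', b') ∨ s(x, y) = s(b', c') ∨ s(x, y) = s(c', d')) ∧ x ≠ y)) →
    a = a' ∧ b = b' ∧ c = c' ∧ d = d' := by decide

/-- MOSS-4 single-trial sampling probability: for an induced connected 4-node
subgraph on the vertex set `S`, isomorphic to the motif `Mi`, the total
probability (over all ordered choices `(v, u, w, r)` of the sampling scheme
that produce `S`) equals `2 φᵢ⁽¹⁾ / Γ`, where `φᵢ⁽¹⁾` is the number of
`P₄`-subgraphs of `Mi` and `Γ = ∑ᵥ (dᵥ−1) ∑_{x∈N(v)} (dₓ−1)`. -/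
theorem moss4_sampling_probability {V : Type*} [Fintype V] [DecidableEq V]
    (G : SimpleGraph V) [DecidableRel G.Adj]
    (Γ : ℝ)
    (hΓ : Γ = ∑ v, ((G.degree v : ℝ) - 1)
        * ∑ x ∈ G.neighborFinset v, ((G.degree x : ℝ) - 1))
    (hΓpos : 0 < Γ)
    (S : Finset V) (hcard : S.card = 4)
    (hconn : (G.induce (S : Set V)).Connected)
    (Mi : SimpleGraph (Fin 4)) (hiso : Nonempty (G.induce (S : Set V) ≃g Mi)) :
    (∑ v, ∑ u, ∑ w, ∑ r,
      if G.Adj v u ∧ w ∈ G.neighborFinset v ∧ w ≠ u ∧ r ∈ G.neighborFinset u ∧ r ≠ v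
          ∧ ({v, u, w, r} : Finset V) = S then
        (((G.degree v : ℝ) - 1) * (∑ x ∈ G.neighborFinset v, ((G.degree x : ℝ) - 1)) / Γ)
          * (((G.degree u : ℝ) - 1) / ∑ x ∈ G.neighborFinset v, ((G.degree x : ℝ) - 1))
          * (1 / ((G.degree v : ℝ) - 1)) * (1 / ((G.degree u : ℝ) - 1))
      else 0)
    = 2 * (Nat.card {H : SimpleGraph (Fin 4) // H ≤ Mi ∧ Nonempty (H ≃g P4)}) / Γ := by
  classical
  obtain ⟨e⟩ := hiso
  have hΓ0 : Γ ≠ 0 := ne_of_gt hΓpos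
  -- distinctness from set equality with S
  have hdistS : ∀ {x y z w : V}, ({x, y, z, w} : Finset V) = S →
      x ≠ y ∧ x ≠ z ∧ x ≠ w ∧ y ≠ z ∧ y ≠ w ∧ z ≠ w := by
    intro x y z w h
    exact MOSS.distinct_of_card4 (by rw [h, hcard])
  -- Step 1 : the sum equals (tuple count)/Γ
  have step1 : (∑ v, ∑ u, ∑ w, ∑ r,
      if G.Adj v u ∧ w ∈ G.neighborFinset v ∧ w ≠ u ∧ r ∈ G.neighborFinset u ∧ r ≠ v
          ∧ ({v, u, w, r} : Finset V) = S then
        (((G.degree v : ℝ) - 1) * (∑ x ∈ G.neighborFinset v, ((G.degree x : ℝ) - 1)) / Γ)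
          * (((G.degree u : ℝ) - 1) / ∑ x ∈ G.neighborFinset v, ((G.degree x : ℝ) - 1))
          * (1 / ((G.degree v : ℝ) - 1)) * (1 / ((G.degree u : ℝ) - 1))
      else 0)
      = ((Finset.univ.filter fun t : V × V × V × V =>
          G.Adj t.1 t.2.1 ∧ t.2.2.1 ∈ G.neighborFinset t.1 ∧ t.2.2.1 ≠ t.2.1 ∧
          t.2.2.2 ∈ G.neighborFinset t.2.1 ∧ t.2.2.2 ≠ t.1 ∧
          ({t.1, t.2.1, t.2.2.1, t.2.2.2} : Finset V) = S).card : ℝ) / Γ := by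
    have hterm : ∀ v u w r : V,
        (if G.Adj v u ∧ w ∈ G.neighborFinset v ∧ w ≠ u ∧ r ∈ G.neighborFinset u ∧ r ≠ v
            ∧ ({v, u, w, r} : Finset V) = S then
          (((G.degree v : ℝ) - 1) * (∑ x ∈ G.neighborFinset v, ((G.degree x : ℝ) - 1)) / Γ)
            * (((G.degree u : ℝ) - 1) / ∑ x ∈ G.neighborFinset v, ((G.degree x : ℝ) - 1))
            * (1 / ((G.degree v : ℝ) - 1)) * (1 / ((G.degree u : ℝ) - 1))
        else 0)
        = (if G.Adj v u ∧ w ∈ G.neighborFinset v ∧ w ≠ u ∧ r ∈ G.neighborFinset u ∧ r ≠ v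
            ∧ ({v, u, w, r} : Finset V) = S then (1 : ℝ) else 0) / Γ := by
      intro v u w r
      split_ifs with h
      · obtain ⟨h1, h2, h3, h4, h5, h6⟩ := h
        rw [SimpleGraph.mem_neighborFinset] at h2 h4
        have hdv : 1 < G.degree v := by
          rw [← SimpleGraph.card_neighborFinset_eq_degree]
          exact Finset.one_lt_card.mpr ⟨u, by rwa [SimpleGraph.mem_neighborFinset],
            w, by rwa [SimpleGraph.mem_neighborFinset], Ne.symm h3⟩
        have hdu : 1 < G.degree u := by
          rw [← SimpleGraph.card_neighborFinset_eq_degree]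
          exact Finset.one_lt_card.mpr ⟨v, by rwa [SimpleGraph.mem_neighborFinset, adj_comm],
            r, by rwa [SimpleGraph.mem_neighborFinset], Ne.symm h5⟩
        have hv1 : (0 : ℝ) < (G.degree v : ℝ) - 1 := by
          have : (1 : ℝ) < (G.degree v : ℝ) := by exact_mod_cast hdv
          linarith
        have hu1 : (0 : ℝ) < (G.degree u : ℝ) - 1 := by
          have : (1 : ℝ) < (G.degree u : ℝ) := by exact_mod_cast hdu
          linarith
        have hsum : 0 < ∑ x ∈ G.neighborFinset v, ((G.degree x : ℝ) - 1) := by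
          apply Finset.sum_pos'
          · intro x hx
            rw [SimpleGraph.mem_neighborFinset] at hx
            have : 0 < G.degree x := by
              rw [← SimpleGraph.card_neighborFinset_eq_degree]
              exact Finset.card_pos.mpr ⟨v, by rwa [SimpleGraph.mem_neighborFinset, adj_comm]⟩
            have : (1 : ℝ) ≤ (G.degree x : ℝ) := by exact_mod_cast this
            linarith
          · exact ⟨u, by rwa [SimpleGraph.mem_neighborFinset], by linarith⟩
        have hne1 : ((G.degree v : ℝ) - 1) ≠ 0 := ne_of_gt hv1
        have hne2 : ((G.degree u : ℝ) - 1) ≠ 0 := ne_of_gt hu1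
        have hne3 : (∑ x ∈ G.neighborFinset v, ((G.degree x : ℝ) - 1)) ≠ 0 := ne_of_gt hsum
        have hrw : (((G.degree v : ℝ) - 1) * (∑ x ∈ G.neighborFinset v, ((G.degree x : ℝ) - 1)) / Γ)
            * (((G.degree u : ℝ) - 1) / ∑ x ∈ G.neighborFinset v, ((G.degree x : ℝ) - 1))
            * (1 / ((G.degree v : ℝ) - 1)) * (1 / ((G.degree u : ℝ) - 1))
            = (((G.degree v : ℝ) - 1) / ((G.degree v : ℝ) - 1))
              * ((∑ x ∈ G.neighborFinset v, ((G.degree x : ℝ) - 1)) / (∑ x ∈ G.neighborFinset v, ((G.degree x : ℝ) - 1)))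
              * (((G.degree u : ℝ) - 1) / ((G.degree u : ℝ) - 1)) * (1 / Γ) := by ring
        rw [hrw, div_self hne1, div_self hne2, div_self hne3]
        ring
      · simp
    simp only [hterm]
    simp only [← Finset.sum_div]
    congr 1
    rw [Finset.card_filter]
    push_cast
    rw [Fintype.sum_prod_type]
    refine Finset.sum_congr rfl fun v _ => ?_
    rw [Fintype.sum_prod_type]
    refine Finset.sum_congr rfl fun u _ => ?_
    rw [Fintype.sum_prod_type]
  -- Step 2 : reorder the tuple into an oriented Hamiltonian path
  have step2 : (Finset.univ.filter fun t : V × V × V × V =>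
        G.Adj t.1 t.2.1 ∧ t.2.2.1 ∈ G.neighborFinset t.1 ∧ t.2.2.1 ≠ t.2.1 ∧
        t.2.2.2 ∈ G.neighborFinset t.2.1 ∧ t.2.2.2 ≠ t.1 ∧
        ({t.1, t.2.1, t.2.2.1, t.2.2.2} : Finset V) = S).card
      = (Finset.univ.filter fun t : V × V × V × V =>
        G.Adj t.1 t.2.1 ∧ G.Adj t.2.1 t.2.2.1 ∧ G.Adj t.2.2.1 t.2.2.2 ∧
        ({t.1, t.2.1, t.2.2.1, t.2.2.2} : Finset V) = S).card := by
    apply Finset.card_bij (fun t _ => (t.2.2.1, t.1, t.2.1, t.2.2.2))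
    · rintro ⟨v, u, w, r⟩ ht
      simp only [Finset.mem_filter, Finset.mem_univ, true_and,
        SimpleGraph.mem_neighborFinset] at ht ⊢
      obtain ⟨h1, h2, h3, h4, h5, h6⟩ := ht
      refine ⟨h2.symm, h1, h4, ?_⟩
      rw [← h6]; ext z; simp [Finset.mem_insert]; tauto
    · rintro ⟨v, u, w, r⟩ h1 ⟨v', u', w', r'⟩ h2 heq
      simp only [Prod.mk.injEq] at heq ⊢
      obtain ⟨a1, a2, a3, a4⟩ := heq
      exact ⟨a2, a3, a1, a4⟩
    · rintro ⟨a, b, c, d⟩ ht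
      simp only [Finset.mem_filter, Finset.mem_univ, true_and,
        SimpleGraph.mem_neighborFinset] at ht
      obtain ⟨h1, h2, h3, h4⟩ := ht
      obtain ⟨n1, n2, n3, n4, n5, n6⟩ := hdistS h4
      refine ⟨(b, c, a, d), ?_, rfl⟩
      simp only [Finset.mem_filter, Finset.mem_univ, true_and,
        SimpleGraph.mem_neighborFinset]
      refine ⟨h2, h1.symm, n2, h3, Ne.symm n5, ?_⟩
      rw [← h4]; ext z; simp [Finset.mem_insert]; tauto
  -- Step 3 : transport to Mi
  have memS : ∀ t : V × V × V × V, t ∈ (Finset.univ.filter fun t : V × V × V × V =>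
        G.Adj t.1 t.2.1 ∧ G.Adj t.2.1 t.2.2.1 ∧ G.Adj t.2.2.1 t.2.2.2 ∧
        ({t.1, t.2.1, t.2.2.1, t.2.2.2} : Finset V) = S) →
      t.1 ∈ (S : Set V) ∧ t.2.1 ∈ (S : Set V) ∧ t.2.2.1 ∈ (S : Set V) ∧ t.2.2.2 ∈ (S : Set V) := by
    rintro ⟨a, b, c, d⟩ ht
    simp only [Finset.mem_filter] at ht
    have h4 := ht.2.2.2.2
    refine ⟨?_, ?_, ?_, ?_⟩ <;> (rw [Finset.mem_coe, ← h4]; simp)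
  have step3 : (Finset.univ.filter fun t : V × V × V × V =>
        G.Adj t.1 t.2.1 ∧ G.Adj t.2.1 t.2.2.1 ∧ G.Adj t.2.2.1 t.2.2.2 ∧
        ({t.1, t.2.1, t.2.2.1, t.2.2.2} : Finset V) = S).card
      = (Finset.univ.filter fun t : Fin 4 × Fin 4 × Fin 4 × Fin 4 =>
        Mi.Adj t.1 t.2.1 ∧ Mi.Adj t.2.1 t.2.2.1 ∧ Mi.Adj t.2.2.1 t.2.2.2 ∧
        ({t.1, t.2.1, t.2.2.1, t.2.2.2} : Finset (Fin 4)) = Finset.univ).card := by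
    apply Finset.card_bij (fun t ht => (e ⟨t.1, (memS t ht).1⟩, e ⟨t.2.1, (memS t ht).2.1⟩,
      e ⟨t.2.2.1, (memS t ht).2.2.1⟩, e ⟨t.2.2.2, (memS t ht).2.2.2⟩))
    · intro t ht
      obtain ⟨hm1, hm2, hm3, hm4⟩ := memS t ht
      simp only [Finset.mem_filter, Finset.mem_univ, true_and] at ht ⊢
      obtain ⟨h1, h2, h3, h4⟩ := ht
      obtain ⟨n1, n2, n3, n4, n5, n6⟩ := hdistS h4
      have eadj : ∀ (x y : V) (hx : x ∈ (S : Set V)) (hy : y ∈ (S : Set V)),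
          G.Adj x y → Mi.Adj (e ⟨x, hx⟩) (e ⟨y, hy⟩) := by
        intro x y hx hy hxy
        rw [e.map_rel_iff]
        exact hxy
      have hinj : ∀ (x y : V) (hx : x ∈ (S : Set V)) (hy : y ∈ (S : Set V)),
          x ≠ y → e ⟨x, hx⟩ ≠ e ⟨y, hy⟩ := by
        intro x y hx hy hne hEq
        exact hne (congrArg Subtype.val (e.injective hEq))
      refine ⟨eadj _ _ _ _ h1, eadj _ _ _ _ h2, eadj _ _ _ _ h3, ?_⟩
      apply Finset.eq_univ_of_card
      rw [MOSS.card4_of_distinct (hinj _ _ _ _ n1) (hinj _ _ _ _ n2) (hinj _ _ _ _ n3)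
        (hinj _ _ _ _ n4) (hinj _ _ _ _ n5) (hinj _ _ _ _ n6)]
      simp
    · rintro ⟨a, b, c, d⟩ h1 ⟨a', b', c', d'⟩ h2 heq
      simp only [Prod.mk.injEq] at heq ⊢
      obtain ⟨q1, q2, q3, q4⟩ := heq
      exact ⟨congrArg Subtype.val (e.injective q1), congrArg Subtype.val (e.injective q2),
        congrArg Subtype.val (e.injective q3), congrArg Subtype.val (e.injective q4)⟩
    · rintro ⟨a, b, c, d⟩ ht
      simp only [Finset.mem_filter, Finset.mem_univ, true_and] at ht
      obtain ⟨h1, h2, h3, h4⟩ := ht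
      obtain ⟨n1, n2, n3, n4, n5, n6⟩ := MOSS.distinct_of_card4 (by rw [h4]; simp)
      have gadj : ∀ x y : Fin 4, Mi.Adj x y → G.Adj ↑(e.symm x) ↑(e.symm y) := by
        intro x y hxy
        exact e.symm.map_rel_iff.mpr hxy
      have hsymminj : ∀ x y : Fin 4, x ≠ y → (↑(e.symm x) : V) ≠ ↑(e.symm y) := by
        intro x y hne hEq
        exact hne (e.symm.injective (Subtype.ext hEq))
      have hmem : ({(↑(e.symm a) : V), ↑(e.symm b), ↑(e.symm c), ↑(e.symm d)} : Finset V) = S := by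
        apply Finset.eq_of_subset_of_card_le
        · intro z hz
          simp only [Finset.mem_insert, Finset.mem_singleton] at hz
          rcases hz with rfl | rfl | rfl | rfl <;> exact (e.symm _).2
        · rw [hcard, MOSS.card4_of_distinct (hsymminj _ _ n1) (hsymminj _ _ n2) (hsymminj _ _ n3)
            (hsymminj _ _ n4) (hsymminj _ _ n5) (hsymminj _ _ n6)]
      refine ⟨(↑(e.symm a), ↑(e.symm b), ↑(e.symm c), ↑(e.symm d)), ?_, ?_⟩
      · simp only [Finset.mem_filter, Finset.mem_univ, true_and]
        exact ⟨gadj _ _ h1, gadj _ _ h2, gadj _ _ h3, hmem⟩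
      · have key : ∀ (x : Fin 4) (pf : (↑(e.symm x) : V) ∈ (S : Set V)),
            e ⟨↑(e.symm x), pf⟩ = x := by
          intro x pf
          have hx : (⟨↑(e.symm x), pf⟩ : (S : Set V)) = e.symm x := Subtype.ext rfl
          rw [hx, e.apply_symm_apply]
        simp only [Prod.mk.injEq]
        exact ⟨key a _, key b _, key c _, key d _⟩
  -- Step 4 : oriented paths are twice the canonically-oriented paths
  have step4 : (Finset.univ.filter fun t : Fin 4 × Fin 4 × Fin 4 × Fin 4 =>
        Mi.Adj t.1 t.2.1 ∧ Mi.Adj t.2.1 t.2.2.1 ∧ Mi.Adj t.2.2.1 t.2.2.2 ∧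
        ({t.1, t.2.1, t.2.2.1, t.2.2.2} : Finset (Fin 4)) = Finset.univ).card
      = 2 * (Finset.univ.filter fun t : Fin 4 × Fin 4 × Fin 4 × Fin 4 =>
        (Mi.Adj t.1 t.2.1 ∧ Mi.Adj t.2.1 t.2.2.1 ∧ Mi.Adj t.2.2.1 t.2.2.2 ∧
        ({t.1, t.2.1, t.2.2.1, t.2.2.2} : Finset (Fin 4)) = Finset.univ) ∧ t.1 < t.2.2.2).card := by
    have hsplit := Finset.card_filter_add_card_filter_not
      (s := Finset.univ.filter fun t : Fin 4 × Fin 4 × Fin 4 × Fin 4 =>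
        Mi.Adj t.1 t.2.1 ∧ Mi.Adj t.2.1 t.2.2.1 ∧ Mi.Adj t.2.2.1 t.2.2.2 ∧
        ({t.1, t.2.1, t.2.2.1, t.2.2.2} : Finset (Fin 4)) = Finset.univ)
      (p := fun t => t.1 < t.2.2.2)
    have hrev : ((Finset.univ.filter fun t : Fin 4 × Fin 4 × Fin 4 × Fin 4 =>
          Mi.Adj t.1 t.2.1 ∧ Mi.Adj t.2.1 t.2.2.1 ∧ Mi.Adj t.2.2.1 t.2.2.2 ∧
          ({t.1, t.2.1, t.2.2.1, t.2.2.2} : Finset (Fin 4)) = Finset.univ).filter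
            fun t => ¬ t.1 < t.2.2.2).card
        = ((Finset.univ.filter fun t : Fin 4 × Fin 4 × Fin 4 × Fin 4 =>
          Mi.Adj t.1 t.2.1 ∧ Mi.Adj t.2.1 t.2.2.1 ∧ Mi.Adj t.2.2.1 t.2.2.2 ∧
          ({t.1, t.2.1, t.2.2.1, t.2.2.2} : Finset (Fin 4)) = Finset.univ).filter
            fun t => t.1 < t.2.2.2).card := by
      apply Finset.card_bij (fun t _ => (t.2.2.2, t.2.2.1, t.2.1, t.1))
      · rintro ⟨a, b, c, d⟩ ht
        simp only [Finset.mem_filter, Finset.mem_univ, true_and] at ht ⊢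
        obtain ⟨⟨h1, h2, h3, h4⟩, h5⟩ := ht
        obtain ⟨n1, n2, n3, n4, n5, n6⟩ := MOSS.distinct_of_card4 (by rw [h4]; simp)
        refine ⟨⟨h3.symm, h2.symm, h1.symm, ?_⟩, ?_⟩
        · rw [← h4]; ext z; simp [Finset.mem_insert]; tauto
        · exact lt_of_le_of_ne (not_lt.mp h5) (Ne.symm n3)
      · rintro ⟨a, b, c, d⟩ h1 ⟨a', b', c', d'⟩ h2 heq
        simp only [Prod.mk.injEq] at heq ⊢
        obtain ⟨q1, q2, q3, q4⟩ := heq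
        exact ⟨q4, q3, q2, q1⟩
      · rintro ⟨a, b, c, d⟩ ht
        simp only [Finset.mem_filter, Finset.mem_univ, true_and] at ht
        obtain ⟨⟨h1, h2, h3, h4⟩, h5⟩ := ht
        refine ⟨(d, c, b, a), ?_, rfl⟩
        simp only [Finset.mem_filter, Finset.mem_univ, true_and]
        refine ⟨⟨h3.symm, h2.symm, h1.symm, ?_⟩, ?_⟩
        · rw [← h4]; ext z; simp [Finset.mem_insert]; tauto
        · exact not_lt.mpr (le_of_lt h5)
    rw [← hsplit, hrev, Finset.filter_filter]
    omega
  -- Step 5 : canonical path tuples biject with P4-subgraphs of Mi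
  have step5 : (Finset.univ.filter fun t : Fin 4 × Fin 4 × Fin 4 × Fin 4 =>
        (Mi.Adj t.1 t.2.1 ∧ Mi.Adj t.2.1 t.2.2.1 ∧ Mi.Adj t.2.2.1 t.2.2.2 ∧
        ({t.1, t.2.1, t.2.2.1, t.2.2.2} : Finset (Fin 4)) = Finset.univ) ∧ t.1 < t.2.2.2).card
      = Nat.card {H : SimpleGraph (Fin 4) // H ≤ Mi ∧ Nonempty (H ≃g P4)} := by
    rw [Nat.card_eq_fintype_card, Fintype.card_subtype]
    apply Finset.card_bij (fun t _ =>
      (fromEdgeSet {s(t.1, t.2.1), s(t.2.1, t.2.2.1), s(t.2.2.1, t.2.2.2)} : SimpleGraph (Fin 4)))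
    · rintro ⟨a, b, c, d⟩ ht
      simp only [Finset.mem_filter, Finset.mem_univ, true_and] at ht ⊢
      obtain ⟨⟨h1, h2, h3, h4⟩, h5⟩ := ht
      obtain ⟨n1, n2, n3, n4, n5, n6⟩ := MOSS.distinct_of_card4 (by rw [h4]; simp)
      constructor
      · intro x y hxy
        rw [MOSS.fe_adj] at hxy
        obtain ⟨hc, hne⟩ := hxy
        rcases hc with hc | hc | hc <;> rw [Sym2.eq_iff] at hc <;>
          rcases hc with ⟨rfl, rfl⟩ | ⟨rfl, rfl⟩
        exacts [h1, h1.symm, h2, h2.symm, h3, h3.symm]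
      · have hbij : Function.Bijective ![a, b, c, d] :=
          Finite.injective_iff_bijective.mp
            (fun x y => MOSS.vec_inj_aux a b c d n1 n2 n3 n4 n5 n6 x y)
      
        refine ⟨RelIso.symm ⟨Equiv.ofBijective ![a, b, c, d] hbij, ?_⟩⟩
        intro x y
        rw [MOSS.fe_adj, MOSS.p4_adj]
        exact MOSS.path_iso_aux a b c d x y n1 n2 n3 n4 n5 n6
    · rintro ⟨a, b, c, d⟩ h1 ⟨a', b', c', d'⟩ h2 heq
      simp only [Finset.mem_filter, Finset.mem_univ, true_and] at h1 h2
      obtain ⟨⟨g1, g2, g3, g4⟩, g5⟩ := h1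
      obtain ⟨⟨k1, k2, k3, k4⟩, k5⟩ := h2
      obtain ⟨n1, n2, n3, n4, n5, n6⟩ := MOSS.distinct_of_card4 (by rw [g4]; simp)
      obtain ⟨m1, m2, m3, m4, m5, m6⟩ := MOSS.distinct_of_card4 (by rw [k4]; simp)
      have hiff : ∀ x y : Fin 4,
          ((s(x, y) = s(a, b) ∨ s(x, y) = s(b, c) ∨ s(x, y) = s(c, d)) ∧ x ≠ y) ↔
          ((s(x, y) = s(a', b') ∨ s(x, y) = s(b', c') ∨ s(x, y) = s(c', d')) ∧ x ≠ y) := by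
        intro x y
        rw [← MOSS.fe_adj, ← MOSS.fe_adj, heq]
      obtain ⟨q1, q2, q3, q4⟩ := MOSS.path_inj_aux a b c d a' b' c' d'
        n1 n2 n3 n4 n5 n6 g5 m1 m2 m3 m4 m5 m6 k5 hiff
      simp only [Prod.mk.injEq]
      exact ⟨q1, q2, q3, q4⟩
    · intro H hH
      simp only [Finset.mem_filter, Finset.mem_univ, true_and] at hH
      obtain ⟨hle, ⟨φ⟩⟩ := hH
      have hinjφ : Function.Injective (φ : Fin 4 → Fin 4) := φ.injective
      have hne : ∀ x y : Fin 4, x ≠ y → φ.symm x ≠ φ.symm y :=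
        fun x y h hEq => h (φ.symm.injective hEq)
      have p4adj01 : P4.Adj 0 1 := by rw [MOSS.p4_adj]; exact ⟨Or.inl rfl, by decide⟩
      have p4adj12 : P4.Adj 1 2 := by rw [MOSS.p4_adj]; exact ⟨Or.inr (Or.inl rfl), by decide⟩
      have p4adj23 : P4.Adj 2 3 := by rw [MOSS.p4_adj]; exact ⟨Or.inr (Or.inr rfl), by decide⟩
      have hHadj : ∀ x y : Fin 4, P4.Adj x y → H.Adj (φ.symm x) (φ.symm y) :=
        fun x y hxy => φ.symm.map_rel_iff.mpr hxy
      have hab : H.Adj (φ.symm 0) (φ.symm 1) := hHadj _ _ p4adj01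
      have hbc : H.Adj (φ.symm 1) (φ.symm 2) := hHadj _ _ p4adj12
      have hcd : H.Adj (φ.symm 2) (φ.symm 3) := hHadj _ _ p4adj23
      have huniv : ({φ.symm 0, φ.symm 1, φ.symm 2, φ.symm 3} : Finset (Fin 4)) = Finset.univ := by
        apply Finset.eq_univ_of_card
        rw [MOSS.card4_of_distinct (hne 0 1 (by decide)) (hne 0 2 (by decide))
          (hne 0 3 (by decide)) (hne 1 2 (by decide)) (hne 1 3 (by decide))
          (hne 2 3 (by decide))]
        simp
      have hHgraph : H = fromEdgeSet {s(φ.symm 0, φ.symm 1), s(φ.symm 1, φ.symm 2),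
          s(φ.symm 2, φ.symm 3)} := by
        ext x y
        rw [MOSS.fe_adj, ← φ.map_rel_iff, MOSS.p4_adj]
        have h0 : (0 : Fin 4) = φ (φ.symm 0) := (φ.apply_symm_apply 0).symm
        have h1' : (1 : Fin 4) = φ (φ.symm 1) := (φ.apply_symm_apply 1).symm
        have h2' : (2 : Fin 4) = φ (φ.symm 2) := (φ.apply_symm_apply 2).symm
        have h3' : (3 : Fin 4) = φ (φ.symm 3) := (φ.apply_symm_apply 3).symm
        rw [h0, h1', h2', h3']
        simp only [MOSS.sym2_congr hinjφ, ne_eq, hinjφ.ne_iff, RelIso.symm_apply_apply]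
      rcases lt_or_gt_of_ne (hne 0 3 (by decide)) with hlt | hlt
      · refine ⟨(φ.symm 0, φ.symm 1, φ.symm 2, φ.symm 3), ?_, hHgraph.symm⟩
        simp only [Finset.mem_filter, Finset.mem_univ, true_and]
        exact ⟨⟨hle hab, hle hbc, hle hcd, huniv⟩, hlt⟩
      · refine ⟨(φ.symm 3, φ.symm 2, φ.symm 1, φ.symm 0), ?_, ?_⟩
        · simp only [Finset.mem_filter, Finset.mem_univ, true_and]
          refine ⟨⟨hle hcd.symm, hle hbc.symm, hle hab.symm, ?_⟩, hlt⟩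
          rw [← huniv]; ext z; simp [Finset.mem_insert]; tauto
        · dsimp only
          refine Eq.trans ?_ hHgraph.symm
          congr 1
          rw [show s(φ.symm 3, φ.symm 2) = s(φ.symm 2, φ.symm 3) from Sym2.eq_swap,
            show s(φ.symm 2, φ.symm 1) = s(φ.symm 1, φ.symm 2) from Sym2.eq_swap,
            show s(φ.symm 1, φ.symm 0) = s(φ.symm 0, φ.symm 1) from Sym2.eq_swap]
          ext z; simp only [Set.mem_insert_iff, Set.mem_singleton_iff]; tauto
  rw [step1, step2, step3, step4, step5]
  push_cast
  ring
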